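/- arXiv:1810.10231 — 4 statements merged into one kernel-verified Lean document; each statement's English description precedes it below -/
import Mathlib

section
/- Let P be a set of n points in general position in the plane. Then there exist two points p₁ and p₂ in ℝ² such that (1) every closed halfplane containing at least one of p₁, p₂ contains at least n/5 of the points of P, and (2) every closed halfplane containing both p₁ and p₂ contains at least 2n/5 of the points of P. -/
/-!
Fix a unit vector `u` and call a closed halfplane `⟪v, x⟫ ≤ c` heavy if it contains more than
`4n/5` points of `P`, or if it recedes along `u` (`⟪v, u⟫ ≤ 0`) and contains more than `3n/5`
points. Any three heavy halfplanes meet: if one of them holds more than `4n/5` points, the three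
share a point of `P` by counting; otherwise every two share a point of `P`, and sliding these
three points along `u` onto a far line, on which the halfplanes cut out intervals, one of them
lands in all three. Helly's theorem in the plane (inside a large ball) gives a point `p₁` in every
heavy halfplane for `u`, and `p₂` for `-u`. A closed halfplane through `p₁` with fewer than `n/5`
points has a complement containing a closed halfplane with more than `4n/5` points that misses
`p₁`; one through `p₁` and `p₂` with fewer than `2n/5` points has such a complement with more than
`3n/5` points, receding along `u` or along `-u`.
-/

open Finset Module
open scoped RealInnerProductSpace Topology

theorem Finset.inter_inter_nonempty_of_two_mul_card_lt {α : Type*} [DecidableEq α]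
    {s t₁ t₂ t₃ : Finset α} (h₁ : t₁ ⊆ s) (h₂ : t₂ ⊆ s) (h₃ : t₃ ⊆ s)
    (h : 2 * #s < #t₁ + #t₂ + #t₃) : (t₁ ∩ t₂ ∩ t₃).Nonempty := by
  have := card_union_add_card_inter t₁ t₂
  have := card_le_card (union_subset h₁ h₂)
  exact inter_nonempty_of_card_lt_card_add_card (inter_subset_left.trans h₁) h₃ (by omega)

theorem Finset.exists_subset_triple {α : Type*} [DecidableEq α] [Nonempty α] {s : Finset α}
    (hs : #s ≤ 3) : ∃ a b c : α, s ⊆ {a, b, c} := by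
  obtain ⟨a⟩ := ‹Nonempty α›
  interval_cases h : #s
  · exact ⟨a, a, a, by simp [card_eq_zero.1 h]⟩
  · obtain ⟨x, rfl⟩ := card_eq_one.1 h
    exact ⟨x, x, x, by simp⟩
  · obtain ⟨x, y, -, rfl⟩ := card_eq_two.1 h
    exact ⟨x, y, y, by simp⟩
  · obtain ⟨x, y, z, -, -, -, rfl⟩ := card_eq_three.1 h
    exact ⟨x, y, z, Subset.rfl⟩

section Convexity

variable {𝕜 V : Type*} [Field 𝕜] [LinearOrder 𝕜] [IsStrictOrderedRing 𝕜]
  [AddCommGroup V] [Module 𝕜 V]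

theorem Convex.helly_theorem_compact_of_finrank_eq_two [TopologicalSpace V] [T2Space V]
    (hV : finrank 𝕜 V = 2) {ι : Type*} {F : ι → Set V} (h_convex : ∀ i, Convex 𝕜 (F i))
    (h_compact : ∀ i, IsCompact (F i)) (h_inter : ∀ i j k, (F i ∩ F j ∩ F k).Nonempty) :
    (⋂ i, F i).Nonempty := by
  classical
  have : FiniteDimensional 𝕜 V := Module.finite_of_finrank_eq_succ hV
  rcases isEmpty_or_nonempty ι with _ | _
  · simp
  refine Convex.helly_theorem_compact' h_convex h_compact fun I hI => ?_
  obtain ⟨a, b, c, hI⟩ := exists_subset_triple (hV ▸ hI)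
  refine (h_inter a b c).mono fun x hx => Set.mem_iInter₂.2 fun i hi => ?_
  rcases mem_insert.1 (hI hi) with rfl | hi
  · exact hx.1.1
  rcases mem_insert.1 hi with rfl | hi
  · exact hx.1.2
  · rw [mem_singleton.1 hi]; exact hx.2

theorem Convex.exists_mem_inter_inter_of_collinear {s t r : Set V}
    (hs : Convex 𝕜 s) (ht : Convex 𝕜 t) (hr : Convex 𝕜 r) {a b c : V}
    (ha : a ∈ s ∩ t) (hb : b ∈ s ∩ r) (hc : c ∈ t ∩ r) (h : Collinear 𝕜 {a, b, c}) :
    ∃ z ∈ ({a, b, c} : Set V), z ∈ s ∩ t ∩ r := by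
  rcases h.wbtw_or_wbtw_or_wbtw with h | h | h
  · exact ⟨b, by simp, ⟨hb.1, ht.segment_subset ha.2 hc.1 h.mem_segment⟩, hb.2⟩
  · exact ⟨c, by simp, ⟨hs.segment_subset hb.1 ha.1 h.mem_segment, hc.1⟩, hc.2⟩
  · exact ⟨a, by simp, ha, hr.segment_subset hc.2 hb.2 h.mem_segment⟩

end Convexity

variable {E : Type*} [NormedAddCommGroup E] [InnerProductSpace ℝ E]

def RecedesAlong (u : E) (H : Set E) : Prop :=
  ∀ x ∈ H, ∀ s : ℝ, 0 ≤ s → x + s • u ∈ H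

theorem recedesAlong_halfspace {u v : E} (h : ⟪v, u⟫ ≤ 0) (c : ℝ) :
    RecedesAlong u {x | ⟪v, x⟫ ≤ c} := by
  intro x hx s hs
  simp only [Set.mem_ofPred_eq, inner_add_right, inner_smul_right] at hx ⊢
  nlinarith

theorem collinear_of_forall_inner_eq [Fact (finrank ℝ E = 2)] {u : E} (hu : u ≠ 0) {t : ℝ}
    {s : Set E} (hs : ∀ x ∈ s, ⟪u, x⟫ = t) : Collinear ℝ s := by
  have hspan : vectorSpan ℝ s ≤ (ℝ ∙ u)ᗮ := by
    refine Submodule.span_le.2 ?_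
    rintro _ ⟨x, hx, y, hy, rfl⟩
    simp [Submodule.mem_orthogonal_singleton_iff_inner_right, inner_sub_right, hs x hx, hs y hy]
  have : FiniteDimensional ℝ E := .of_fact_finrank_eq_succ 1
  rw [collinear_iff_finrank_le_one]
  exact (Submodule.finrank_mono hspan).trans (Submodule.finrank_orthogonal_span_singleton hu).le

theorem exists_mem_inter_inter_of_recedesAlong [Fact (finrank ℝ E = 2)] {u : E} (hu : ‖u‖ = 1)
    {H₁ H₂ H₃ : Set E} (hc₁ : Convex ℝ H₁) (hc₂ : Convex ℝ H₂) (hc₃ : Convex ℝ H₃)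
    (hr₁ : RecedesAlong u H₁) (hr₂ : RecedesAlong u H₂) (hr₃ : RecedesAlong u H₃)
    {R : ℝ} {a b c : E} (ha : a ∈ H₁ ∩ H₂) (hb : b ∈ H₁ ∩ H₃) (hc : c ∈ H₂ ∩ H₃)
    (haR : ‖a‖ ≤ R) (hbR : ‖b‖ ≤ R) (hcR : ‖c‖ ≤ R) :
    ∃ z ∈ H₁ ∩ H₂ ∩ H₃, ‖z‖ ≤ 3 * R := by
  set slide : E → E := fun x => x + (R - ⟪u, x⟫) • u
  have hslide_inner (x : E) : ⟪u, slide x⟫ = R := by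
    simp [slide, inner_add_right, inner_smul_right, hu]
  have hslide {x : E} (hx : ‖x‖ ≤ R) : 0 ≤ R - ⟪u, x⟫ ∧ ‖slide x‖ ≤ 3 * R := by
    have hux := abs_le.1 (by simpa [hu] using abs_real_inner_le_norm u x : |⟪u, x⟫| ≤ ‖x‖)
    have h₀ : 0 ≤ R - ⟪u, x⟫ := by linarith
    refine ⟨h₀, ?_⟩
    calc ‖slide x‖ ≤ ‖x‖ + ‖(R - ⟪u, x⟫) • u‖ := norm_add_le _ _
      _ = ‖x‖ + (R - ⟪u, x⟫) := by rw [norm_smul, hu, mul_one, Real.norm_of_nonneg h₀]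
      _ ≤ 3 * R := by linarith
  obtain ⟨z, hz, hzH⟩ := Convex.exists_mem_inter_inter_of_collinear hc₁ hc₂ hc₃
    (a := slide a) (b := slide b) (c := slide c)
    ⟨hr₁ a ha.1 _ (hslide haR).1, hr₂ a ha.2 _ (hslide haR).1⟩
    ⟨hr₁ b hb.1 _ (hslide hbR).1, hr₃ b hb.2 _ (hslide hbR).1⟩
    ⟨hr₂ c hc.1 _ (hslide hcR).1, hr₃ c hc.2 _ (hslide hcR).1⟩
    (collinear_of_forall_inner_eq (norm_ne_zero_iff.1 (hu ▸ one_ne_zero)) (t := R)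
      (by rintro _ (rfl | rfl | rfl) <;> exact hslide_inner _))
  refine ⟨z, hzH, ?_⟩
  rcases hz with rfl | rfl | rfl
  exacts [(hslide haR).2, (hslide hbR).2, (hslide hcR).2]

def IsHeavyHalfspace (P : Finset E) (u v : E) (c : ℝ) : Prop :=
  4 / 5 * #P < (#{x ∈ P | ⟪v, x⟫ ≤ c} : ℝ) ∨
    ⟪v, u⟫ ≤ 0 ∧ 3 / 5 * #P < (#{x ∈ P | ⟪v, x⟫ ≤ c} : ℝ)

namespace IsHeavyHalfspace

variable {P : Finset E} {u v₁ v₂ v₃ : E} {c₁ c₂ c₃ : ℝ}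

theorem three_fifths_lt (h : IsHeavyHalfspace P u v₁ c₁) :
    3 / 5 * #P < (#{x ∈ P | ⟪v₁, x⟫ ≤ c₁} : ℝ) := by
  have : (0 : ℝ) ≤ #P := Nat.cast_nonneg _
  rcases h with h | ⟨-, h⟩ <;> linarith

theorem exists_mem_inter (h₁ : IsHeavyHalfspace P u v₁ c₁) (h₂ : IsHeavyHalfspace P u v₂ c₂) :
    ∃ x ∈ P, ⟪v₁, x⟫ ≤ c₁ ∧ ⟪v₂, x⟫ ≤ c₂ := by
  classical
  have hlt : (#P : ℝ) < #{x ∈ P | ⟪v₁, x⟫ ≤ c₁} + #{x ∈ P | ⟪v₂, x⟫ ≤ c₂} := by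
    linarith [h₁.three_fifths_lt, h₂.three_fifths_lt, (Nat.cast_nonneg _ : (0 : ℝ) ≤ #P)]
  obtain ⟨x, hx⟩ := inter_nonempty_of_card_lt_card_add_card (filter_subset _ P)
    (filter_subset _ P) (by exact_mod_cast hlt)
  simp only [mem_inter, mem_filter] at hx
  exact ⟨x, hx.1.1, hx.1.2, hx.2.2⟩

theorem exists_mem_inter_inter [Fact (finrank ℝ E = 2)] (hu : ‖u‖ = 1) {R : ℝ}
    (hR : ∀ x ∈ P, ‖x‖ ≤ R) (h₁ : IsHeavyHalfspace P u v₁ c₁)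
    (h₂ : IsHeavyHalfspace P u v₂ c₂) (h₃ : IsHeavyHalfspace P u v₃ c₃) :
    ∃ z, (⟪v₁, z⟫ ≤ c₁ ∧ ⟪v₂, z⟫ ≤ c₂ ∧ ⟪v₃, z⟫ ≤ c₃) ∧ ‖z‖ ≤ 3 * R := by
  classical
  have hconvex (v : E) (c : ℝ) : Convex ℝ {x | ⟪v, x⟫ ≤ c} :=
    convex_halfSpace_le (innerₛₗ ℝ v).isLinear c
  by_cases hrec : ⟪v₁, u⟫ ≤ 0 ∧ ⟪v₂, u⟫ ≤ 0 ∧ ⟪v₃, u⟫ ≤ 0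
  · obtain ⟨a, haP, ha⟩ := h₁.exists_mem_inter h₂
    obtain ⟨b, hbP, hb⟩ := h₁.exists_mem_inter h₃
    obtain ⟨c, hcP, hc⟩ := h₂.exists_mem_inter h₃
    obtain ⟨z, ⟨⟨hz₁, hz₂⟩, hz₃⟩, hz⟩ := exists_mem_inter_inter_of_recedesAlong hu
      (hconvex v₁ c₁) (hconvex v₂ c₂) (hconvex v₃ c₃) (recedesAlong_halfspace hrec.1 c₁)
      (recedesAlong_halfspace hrec.2.1 c₂) (recedesAlong_halfspace hrec.2.2 c₃)
      ha hb hc (hR a haP) (hR b hbP) (hR c hcP)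
    exact ⟨z, ⟨hz₁, hz₂, hz₃⟩, hz⟩
  · have hlt : 2 * (#P : ℝ) < #{x ∈ P | ⟪v₁, x⟫ ≤ c₁} + #{x ∈ P | ⟪v₂, x⟫ ≤ c₂} +
        #{x ∈ P | ⟪v₃, x⟫ ≤ c₃} := by
      have := h₁.three_fifths_lt; have := h₂.three_fifths_lt; have := h₃.three_fifths_lt
      rcases h₁ with h₁ | h₁ <;> rcases h₂ with h₂ | h₂ <;> rcases h₃ with h₃ | h₃ <;>
        first | linarith | exact absurd ⟨h₁.1, h₂.1, h₃.1⟩ hrec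
    obtain ⟨x, hx⟩ := inter_inter_nonempty_of_two_mul_card_lt (filter_subset _ P)
      (filter_subset _ P) (filter_subset _ P) (by exact_mod_cast hlt)
    simp only [mem_inter, mem_filter] at hx
    have hxR := hR x hx.1.1.1
    exact ⟨x, ⟨hx.1.1.2, hx.1.2.2, hx.2.2⟩, by linarith [norm_nonneg x]⟩

end IsHeavyHalfspace

theorem exists_mem_heavyHalfspaces [Fact (finrank ℝ E = 2)] (P : Finset E) {u : E}
    (hu : ‖u‖ = 1) : ∃ p : E, ∀ v c, IsHeavyHalfspace P u v c → ⟪v, p⟫ ≤ c := by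
  have : FiniteDimensional ℝ E := .of_fact_finrank_eq_succ 1
  obtain ⟨R, hR⟩ := P.finite_toSet.isBounded.exists_norm_le
  set F : {h : E × ℝ // IsHeavyHalfspace P u h.1 h.2} → Set E :=
    fun h => {x | ⟪h.1.1, x⟫ ≤ h.1.2} ∩ Metric.closedBall 0 (3 * R)
  obtain ⟨p, hp⟩ := Convex.helly_theorem_compact_of_finrank_eq_two (F := F) Fact.out
    (fun h => (convex_halfSpace_le (innerₛₗ ℝ h.1.1).isLinear _).inter (convex_closedBall _ _))
    (fun h => (isCompact_closedBall _ _).inter_left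
      (isClosed_le (innerSL ℝ h.1.1).continuous continuous_const))
    fun i j k => by
      obtain ⟨z, ⟨hi, hj, hk⟩, hz⟩ := i.2.exists_mem_inter_inter hu hR j.2 k.2
      have hzB : z ∈ Metric.closedBall 0 (3 * R) := mem_closedBall_zero_iff.2 hz
      exact ⟨z, ⟨⟨hi, hzB⟩, hj, hzB⟩, hk, hzB⟩
  exact ⟨p, fun v c h => (Set.mem_iInter.1 hp ⟨(v, c), h⟩).1⟩

theorem exists_gt_forall_le_of_lt {α : Type*} (P : Finset α) (f : α → ℝ) (c : ℝ) :
    ∃ c' > c, ∀ x ∈ P, c < f x → c' ≤ f x := by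
  have : ∀ᶠ c' in 𝓝[>] c, ∀ x ∈ P, c < f x → c' ≤ f x :=
    (Filter.eventually_all_finset P).2 fun x _ => by
      by_cases hx : c < f x
      · exact ((eventually_lt_nhds hx).filter_mono nhdsWithin_le_nhds).mono fun _ h _ => h.le
      · exact Filter.Eventually.of_forall fun _ h => absurd h hx
  obtain ⟨c', h, hc'⟩ := (this.and eventually_mem_nhdsWithin).exists
  exact ⟨c', hc', h⟩

theorem card_sub_le_card_halfspace_of_forall_mem {P : Finset E} {p v : E} {c θ : ℝ}
    (hp : ∀ d, θ < (#{x ∈ P | ⟪-v, x⟫ ≤ d} : ℝ) → ⟪-v, p⟫ ≤ d) (hpc : ⟪v, p⟫ ≤ c) :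
    #P - θ ≤ (#{x ∈ P | ⟪v, x⟫ ≤ c} : ℝ) := by
  classical
  obtain ⟨c', hcc', hc'⟩ := exists_gt_forall_le_of_lt P (⟪v, ·⟫) c
  have hsplit : (#{x ∈ P | ⟪v, x⟫ ≤ c} : ℝ) + #{x ∈ P | ¬ ⟪v, x⟫ ≤ c} = #P := by
    exact_mod_cast card_filter_add_card_filter_not _
  have hsub : #{x ∈ P | ¬ ⟪v, x⟫ ≤ c} ≤ #{x ∈ P | ⟪-v, x⟫ ≤ -c'} :=
    card_le_card fun x hx => by
      rw [mem_filter] at hx ⊢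
      exact ⟨hx.1, by rw [inner_neg_left, neg_le_neg_iff]; exact hc' x hx.1 (not_le.1 hx.2)⟩
  by_contra hlt
  have hp' := hp (-c') (by linarith [(Nat.cast_le (α := ℝ)).2 hsub])
  rw [inner_neg_left, neg_le_neg_iff] at hp'
  linarith

theorem two_points_plane_general (n : ℕ) (P : Finset (EuclideanSpace ℝ (Fin 2)))
    (hcard : P.card = n) :
    ∃ p₁ p₂ : EuclideanSpace ℝ (Fin 2),
      (∀ (v : EuclideanSpace ℝ (Fin 2)) (c : ℝ), v ≠ 0 →
        ((inner ℝ v p₁ : ℝ) ≤ c ∨ (inner ℝ v p₂ : ℝ) ≤ c) →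
        (n : ℝ) / 5 ≤ (P.filter (fun x => (inner ℝ v x : ℝ) ≤ c)).card) ∧
      (∀ (v : EuclideanSpace ℝ (Fin 2)) (c : ℝ), v ≠ 0 →
        (inner ℝ v p₁ : ℝ) ≤ c → (inner ℝ v p₂ : ℝ) ≤ c →
        2 * (n : ℝ) / 5 ≤ (P.filter (fun x => (inner ℝ v x : ℝ) ≤ c)).card) := by
  subst hcard
  have : Fact (finrank ℝ (EuclideanSpace ℝ (Fin 2)) = 2) := ⟨finrank_euclideanSpace_fin⟩
  obtain ⟨u, hu⟩ : ∃ u : EuclideanSpace ℝ (Fin 2), ‖u‖ = 1 :=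
    ⟨EuclideanSpace.single 0 1, by simp⟩
  obtain ⟨p₁, hp₁⟩ := exists_mem_heavyHalfspaces P hu
  obtain ⟨p₂, hp₂⟩ := exists_mem_heavyHalfspaces P (u := -u) (by rwa [norm_neg])
  refine ⟨p₁, p₂, fun v c _ hv => ?_, fun v c _ hv₁ hv₂ => ?_⟩
  · rcases hv with hv | hv
    · linarith [card_sub_le_card_halfspace_of_forall_mem (fun d hd => hp₁ (-v) d (.inl hd)) hv]
    · linarith [card_sub_le_card_halfspace_of_forall_mem (fun d hd => hp₂ (-v) d (.inl hd)) hv]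
  · rcases le_total ⟪-v, u⟫ 0 with h | h
    · linarith [card_sub_le_card_halfspace_of_forall_mem
        (fun d hd => hp₁ (-v) d (.inr ⟨h, hd⟩)) hv₁]
    · have h' : ⟪-v, -u⟫ ≤ 0 := by rw [inner_neg_right]; linarith
      linarith [card_sub_le_card_halfspace_of_forall_mem
        (fun d hd => hp₂ (-v) d (.inr ⟨h', hd⟩)) hv₂]

/-- For any finite set `P` of `n` points in general position in the plane,
there are two points `p₁, p₂ ∈ ℝ²` such that every closed halfplane containing at least one
of them contains at least `n/5` of the points of `P`, and every closed halfplane containing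
both contains at least `2n/5` of the points of `P`. -/
theorem two_points_plane (n : ℕ) (P : Finset (EuclideanSpace ℝ (Fin 2)))
    (hcard : P.card = n)
    (hgp : ∀ p₁ ∈ P, ∀ p₂ ∈ P, ∀ p₃ ∈ P, p₁ ≠ p₂ → p₁ ≠ p₃ → p₂ ≠ p₃ →
      ¬ Collinear ℝ ({p₁, p₂, p₃} : Set (EuclideanSpace ℝ (Fin 2)))) :
    ∃ p₁ p₂ : EuclideanSpace ℝ (Fin 2),
      (∀ (v : EuclideanSpace ℝ (Fin 2)) (c : ℝ), v ≠ 0 →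
        ((inner ℝ v p₁ : ℝ) ≤ c ∨ (inner ℝ v p₂ : ℝ) ≤ c) →
        (n : ℝ) / 5 ≤ (P.filter (fun x => (inner ℝ v x : ℝ) ≤ c)).card) ∧
      (∀ (v : EuclideanSpace ℝ (Fin 2)) (c : ℝ), v ≠ 0 →
        (inner ℝ v p₁ : ℝ) ≤ c → (inner ℝ v p₂ : ℝ) ≤ c →
        2 * (n : ℝ) / 5 ≤ (P.filter (fun x => (inner ℝ v x : ℝ) ≤ c)).card) :=
  two_points_plane_general n P hcard
end

section
/- For every positive integer k there exists a set P of n = 5k points in general position in the plane such that for every pair of points p₁, p₂ ∈ ℝ² there is a closed halfplane h with either (h contains at least one of p₁, p₂ and h contains at most n/5 points of P) or (h contains both p₁ and p₂ and h contains at most 2n/5 points of P). In other words, one cannot find two points such that every closed halfplane containing one of them contains strictly more than n/5 of the points and every closed halfplane containing both contains strictly more than 2n/5 of the points. -/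
/-!
Put `k` points on the unit circle inside an arc of length `1/100` starting at each vertex `u j`
of a regular pentagon; points on a circle are in general position. Let `c = cos (2π/5)`.
If one of the two points `p` has `1/2 ≤ ⟪u j, p⟫`, the halfplane `1/2 ≤ ⟪u j, x⟫` contains `p` and
only the cluster at `u j`. Otherwise, since `u (j - 1) + u (j + 1) = 2c • u j`, for every `j` one
of `⟪u (j ± 1), p⟫` is at most `c/2`. So for each of the two points the set of `j` with
`⟪u j, p⟫ ≤ c/2` meets every pair `{j - 1, j + 1}` of `ℤ/5`, hence has at least three elements,
and the two sets share some `m`: the halfplane `⟪u m, x⟫ ≤ c/2` contains both points and only the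
two clusters opposite to `u m`.
-/

open Real Finset
open scoped RealInnerProductSpace

local notation "ℝ²" => EuclideanSpace ℝ (Fin 2)

noncomputable def unitVec (θ : ℝ) : ℝ² := !₂[cos θ, sin θ]

theorem inner_unitVec_unitVec (a b : ℝ) : ⟪unitVec a, unitVec b⟫ = cos (a - b) := by
  simp only [unitVec, PiLp.inner_apply, RCLike.inner_apply, conj_trivial, Fin.sum_univ_two,
    Matrix.cons_val_zero, Matrix.cons_val_one, Matrix.cons_val_fin_one, cos_sub]
  ring

theorem norm_unitVec (a : ℝ) : ‖unitVec a‖ = 1 := by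
  rw [← pow_left_inj₀ (norm_nonneg _) zero_le_one two_ne_zero, one_pow,
    ← real_inner_self_eq_norm_sq, inner_unitVec_unitVec, sub_self, cos_zero]

theorem unitVec_ne_zero (a : ℝ) : unitVec a ≠ 0 :=
  norm_ne_zero_iff.1 (by rw [norm_unitVec]; exact one_ne_zero)

theorem unitVec_add_int_mul_two_pi (a : ℝ) (n : ℤ) : unitVec (a + n * (2 * π)) = unitVec a := by
  simp [unitVec, cos_add_int_mul_two_pi, sin_add_int_mul_two_pi]

theorem unitVec_sub_add_unitVec_add (a b : ℝ) :
    unitVec (a - b) + unitVec (a + b) = (2 * cos b) • unitVec a := by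
  ext i
  fin_cases i <;>
    simp only [unitVec, PiLp.add_apply, PiLp.smul_apply, smul_eq_mul, Fin.zero_eta, Fin.mk_one,
      Matrix.cons_val_zero, Matrix.cons_val_one, Matrix.cons_val_fin_one, cos_sub, cos_add,
      sin_sub, sin_add] <;>
    ring

theorem cos_two_pi_div_five_mem_Ioo : cos (2 * π / 5) ∈ Set.Ioo (1 / 4) (1 / 3) := by
  have h5 : √5 ^ 2 = 5 := sq_sqrt (by norm_num)
  have hlo : 2 < √5 := by rw [lt_sqrt (by norm_num)]; norm_num
  have hhi : √5 < 7 / 3 := by rw [sqrt_lt' (by norm_num)]; norm_num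
  rw [show 2 * π / 5 = 2 * (π / 5) by ring, cos_two_mul, cos_pi_div_five]
  constructor <;> nlinarith

theorem two_pi_mul_div_five_eq (r : ℤ) :
    2 * π * r / 5 = 2 * π * (r : ZMod 5).val / 5 + (r / 5 : ℤ) * (2 * π) := by
  have hval : ((r : ZMod 5).val : ℝ) = ((r % 5 : ℤ) : ℝ) := by exact_mod_cast ZMod.val_intCast r
  have hr : (r : ℝ) = ((r % 5 : ℤ) : ℝ) + 5 * ((r / 5 : ℤ) : ℝ) := by
    exact_mod_cast (Int.emod_add_mul_ediv r 5).symm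
  rw [hval, hr]
  ring

theorem ZMod.five_cases (s : ZMod 5) : s = 0 ∨ s = 1 ∨ s = 2 ∨ s = 3 ∨ s = 4 := by
  decide +revert

theorem cos_two_pi_mul_div_five_le (r : ℤ) (hr : (r : ZMod 5) ≠ 0) :
    cos (2 * π * r / 5) ≤ cos (2 * π / 5) := by
  have h42 : cos (2 * π * 2 / 5) ≤ cos (2 * π / 5) :=
    cos_le_cos_of_nonneg_of_le_pi (by positivity) (by linarith [pi_pos]) (by linarith [pi_pos])
  rw [two_pi_mul_div_five_eq, cos_add_int_mul_two_pi]
  rcases ZMod.five_cases (r : ZMod 5) with h | h | h | h | h <;> rw [h] at hr ⊢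
  · exact absurd rfl hr
  · rw [ZMod.val_one_eq_one_mod]; norm_num
  · rw [ZMod.val_ofNat]; norm_num [h42]
  · rw [ZMod.val_ofNat]
    norm_num
    rwa [show 2 * π * 3 / 5 = 2 * π - 2 * π * 2 / 5 by ring, cos_two_pi_sub]
  · rw [ZMod.val_ofNat]
    norm_num
    rw [show 2 * π * 4 / 5 = 2 * π - 2 * π / 5 by ring, cos_two_pi_sub]

theorem cos_two_pi_div_five_le_cos_two_pi_mul_div_five (r : ℤ) (h2 : (r : ZMod 5) ≠ 2)
    (h3 : (r : ZMod 5) ≠ 3) : cos (2 * π / 5) ≤ cos (2 * π * r / 5) := by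
  rw [two_pi_mul_div_five_eq, cos_add_int_mul_two_pi]
  rcases ZMod.five_cases (r : ZMod 5) with h | h | h | h | h <;> rw [h] at h2 h3 ⊢
  · simpa using cos_le_one _
  · rw [ZMod.val_one_eq_one_mod]; norm_num
  · exact absurd rfl h2
  · exact absurd rfl h3
  · rw [ZMod.val_ofNat]
    norm_num
    rw [show 2 * π * 4 / 5 = 2 * π - 2 * π / 5 by ring, cos_two_pi_sub]

noncomputable def pentagonVertex (j : ZMod 5) : ℝ² := unitVec (2 * π * j.val / 5)

theorem pentagonVertex_intCast (r : ℤ) : pentagonVertex r = unitVec (2 * π * r / 5) := by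
  rw [pentagonVertex, two_pi_mul_div_five_eq, unitVec_add_int_mul_two_pi]

theorem pentagonVertex_ne_zero (j : ZMod 5) : pentagonVertex j ≠ 0 := unitVec_ne_zero _

theorem pentagonVertex_sub_one_add_pentagonVertex_add_one (j : ZMod 5) :
    pentagonVertex (j - 1) + pentagonVertex (j + 1) = (2 * cos (2 * π / 5)) • pentagonVertex j := by
  have hj : j = ((j.val : ℤ) : ZMod 5) := by simp
  rw [hj, ← Int.cast_one, ← Int.cast_sub, ← Int.cast_add, pentagonVertex_intCast,
    pentagonVertex_intCast, pentagonVertex_intCast, ← unitVec_sub_add_unitVec_add]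
  push_cast
  ring_nf

theorem exists_inner_pentagonVertex_eq_cos (m j : ZMod 5) (d : ℝ) :
    ∃ r : ℤ, (r : ZMod 5) = m - j ∧
      ⟪pentagonVertex m, unitVec (2 * π * j.val / 5 + d)⟫ = cos (2 * π * r / 5 - d) := by
  refine ⟨m.val - j.val, by simp, ?_⟩
  rw [pentagonVertex, inner_unitVec_unitVec]
  push_cast
  ring_nf

theorem inner_pentagonVertex_self_add (j : ZMod 5) (d : ℝ) :
    ⟪pentagonVertex j, unitVec (2 * π * j.val / 5 + d)⟫ = cos d := by
  rw [pentagonVertex, inner_unitVec_unitVec, sub_add_cancel_left, cos_neg]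

theorem inner_pentagonVertex_lt_half {m j : ZMod 5} (hjm : j ≠ m) {d : ℝ} (hd : |d| ≤ 1 / 100) :
    ⟪pentagonVertex m, unitVec (2 * π * j.val / 5 + d)⟫ < 1 / 2 := by
  obtain ⟨r, hr, hinner⟩ := exists_inner_pentagonVertex_eq_cos m j d
  have hcos := cos_two_pi_mul_div_five_le r (by rw [hr]; exact sub_ne_zero.2 hjm.symm)
  have hlip := abs_cos_sub_cos_le (2 * π * r / 5 - d) (2 * π * r / 5)
  rw [sub_sub_cancel_left, abs_neg] at hlip
  rw [hinner]
  linarith [(abs_le.1 hlip).2, cos_two_pi_div_five_mem_Ioo.2]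

theorem half_cos_lt_inner_pentagonVertex {m j : ZMod 5} (h2 : m - j ≠ 2) (h3 : m - j ≠ 3)
    {d : ℝ} (hd : |d| ≤ 1 / 100) :
    cos (2 * π / 5) / 2 < ⟪pentagonVertex m, unitVec (2 * π * j.val / 5 + d)⟫ := by
  obtain ⟨r, hr, hinner⟩ := exists_inner_pentagonVertex_eq_cos m j d
  have hcos := cos_two_pi_div_five_le_cos_two_pi_mul_div_five r (hr ▸ h2) (hr ▸ h3)
  have hlip := abs_cos_sub_cos_le (2 * π * r / 5 - d) (2 * π * r / 5)
  rw [sub_sub_cancel_left, abs_neg] at hlip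
  rw [hinner]
  linarith [(abs_le.1 hlip).1, cos_two_pi_div_five_mem_Ioo.1]

theorem inner_pentagonVertex_sub_one_le_or_add_one_le {p : ℝ²}
    (hp : ∀ j, ⟪pentagonVertex j, p⟫ < 1 / 2) (j : ZMod 5) :
    ⟪pentagonVertex (j - 1), p⟫ ≤ cos (2 * π / 5) / 2 ∨
      ⟪pentagonVertex (j + 1), p⟫ ≤ cos (2 * π / 5) / 2 := by
  by_contra! h
  have hsum := congrArg (⟪·, p⟫) (pentagonVertex_sub_one_add_pentagonVertex_add_one j)
  simp only [inner_add_left, real_inner_smul_left] at hsum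
  have hc := cos_two_pi_div_five_mem_Ioo.1
  linarith [mul_lt_mul_of_pos_left (hp j) (by linarith : (0 : ℝ) < 2 * cos (2 * π / 5))]

theorem ZMod.exists_mem_and_mem_of_forall_sub_one_mem_or_add_one_mem :
    ∀ S T : Finset (ZMod 5), (∀ j, j - 1 ∈ S ∨ j + 1 ∈ S) → (∀ j, j - 1 ∈ T ∨ j + 1 ∈ T) →
      ∃ m, m ∈ S ∧ m ∈ T := by
  decide

theorem exists_inner_pentagonVertex_le_and_le {p q : ℝ²}
    (hp : ∀ j, ⟪pentagonVertex j, p⟫ < 1 / 2) (hq : ∀ j, ⟪pentagonVertex j, q⟫ < 1 / 2) :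
    ∃ m, ⟪pentagonVertex m, p⟫ ≤ cos (2 * π / 5) / 2 ∧
      ⟪pentagonVertex m, q⟫ ≤ cos (2 * π / 5) / 2 := by
  classical
  simpa using ZMod.exists_mem_and_mem_of_forall_sub_one_mem_or_add_one_mem
    {j | ⟪pentagonVertex j, p⟫ ≤ cos (2 * π / 5) / 2}
    {j | ⟪pentagonVertex j, q⟫ ≤ cos (2 * π / 5) / 2}
    (by simpa using inner_pentagonVertex_sub_one_le_or_add_one_le hp)
    (by simpa using inner_pentagonVertex_sub_one_le_or_add_one_le hq)

theorem card_filter_image_le {ι κ E : Type*} [Fintype ι] [Fintype κ] [DecidableEq E]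
    (f : ι × κ → E) (p : E → Prop) [DecidablePred p] (S : Finset ι)
    (h : ∀ x, p (f x) → x.1 ∈ S) :
    #((univ.image f).filter p) ≤ #S * Fintype.card κ := by
  rw [filter_image]
  calc _ ≤ #(univ.filter fun x => p (f x)) := card_image_le
    _ ≤ #(S ×ˢ (univ : Finset κ)) :=
      card_le_card fun x hx => mem_product.2 ⟨h x (mem_filter.1 hx).2, mem_univ _⟩
    _ = #S * Fintype.card κ := by rw [card_product, card_univ]

noncomputable def clusterOffset (k : ℕ) (i : Fin k) : ℝ := i / (100 * k)

theorem clusterOffset_nonneg (k : ℕ) (i : Fin k) : 0 ≤ clusterOffset k i := by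
  unfold clusterOffset; positivity

theorem abs_clusterOffset_le (k : ℕ) (i : Fin k) : |clusterOffset k i| ≤ 1 / 100 := by
  have hk : (0 : ℝ) < k := by exact_mod_cast i.pos
  have hi : (i : ℝ) ≤ k := by exact_mod_cast i.is_lt.le
  rw [abs_of_nonneg (clusterOffset_nonneg k i), clusterOffset, div_le_div_iff₀ (by positivity)
    (by norm_num)]
  linarith

theorem clusterOffset_injective (k : ℕ) : Function.Injective (clusterOffset k) := by
  intro i i' h
  have hk : (0 : ℝ) < k := by exact_mod_cast i.pos
  rw [clusterOffset, clusterOffset, div_left_inj' (by positivity)] at h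
  exact Fin.ext (by exact_mod_cast h)

noncomputable def clusterPoint (k : ℕ) (x : ZMod 5 × Fin k) : ℝ² :=
  unitVec (2 * π * x.1.val / 5 + clusterOffset k x.2)

theorem clusterPoint_injective (k : ℕ) : Function.Injective (clusterPoint k) := by
  rintro ⟨j, i⟩ ⟨j', i'⟩ h
  have hcos : ∀ i : Fin k, 1 / 2 < cos (clusterOffset k i) := fun i => by
    have hlip := abs_cos_sub_cos_le (clusterOffset k i) 0
    rw [sub_zero, cos_zero] at hlip
    linarith [(abs_le.1 hlip).1, abs_clusterOffset_le k i]
  have hj : j = j' := by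
    by_contra hne
    have hlt := inner_pentagonVertex_lt_half (Ne.symm hne) (abs_clusterOffset_le k i')
    have hself := inner_pentagonVertex_self_add j (clusterOffset k i)
    simp only [clusterPoint] at h
    rw [h] at hself
    linarith [hcos i]
  subst hj
  have heq : cos (clusterOffset k i) = cos (clusterOffset k i') := by
    rw [← inner_pentagonVertex_self_add j, ← inner_pentagonVertex_self_add j]
    exact congrArg _ h
  have hmem : ∀ i : Fin k, clusterOffset k i ∈ Set.Icc 0 π := fun i =>
    ⟨clusterOffset_nonneg k i,
      by linarith [(le_abs_self _).trans (abs_clusterOffset_le k i), pi_gt_three]⟩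
  rw [clusterOffset_injective k (injOn_cos (hmem i) (hmem i') heq)]

open Classical in
noncomputable def pentagonClusters (k : ℕ) : Finset ℝ² := univ.image (clusterPoint k)

theorem card_pentagonClusters (k : ℕ) : #(pentagonClusters k) = 5 * k := by
  rw [pentagonClusters, card_image_of_injective _ (clusterPoint_injective k), card_univ,
    Fintype.card_prod, ZMod.card, Fintype.card_fin]

theorem cospherical_pentagonClusters (k : ℕ) :
    EuclideanGeometry.Cospherical (pentagonClusters k : Set ℝ²) :=
  ⟨0, 1, fun p hp => by
    obtain ⟨x, -, rfl⟩ := mem_image.1 hp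
    exact (dist_zero_right _).trans (norm_unitVec _)⟩

theorem card_filter_neg_inner_pentagonVertex_le (k : ℕ) (m : ZMod 5) :
    #((pentagonClusters k).filter fun x => ⟪-pentagonVertex m, x⟫ ≤ -(1 / 2)) ≤ k := by
  classical
  calc _ ≤ #({m} : Finset (ZMod 5)) * Fintype.card (Fin k) :=
        card_filter_image_le (clusterPoint k) _ _ fun x hx => by
          by_contra hne
          have := inner_pentagonVertex_lt_half (m := m) (mem_singleton.not.1 hne)
            (abs_clusterOffset_le k x.2)
          rw [inner_neg_left] at hx
          exact (this.trans_le (neg_le_neg_iff.1 hx)).false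
    _ = k := by rw [card_singleton, one_mul, Fintype.card_fin]

theorem card_filter_inner_pentagonVertex_le (k : ℕ) (m : ZMod 5) :
    #((pentagonClusters k).filter fun x => ⟪pentagonVertex m, x⟫ ≤ cos (2 * π / 5) / 2) ≤
      2 * k := by
  classical
  calc _ ≤ #({m - 2, m - 3} : Finset (ZMod 5)) * Fintype.card (Fin k) :=
        card_filter_image_le (clusterPoint k) _ _ fun x hx => by
          by_contra hne
          simp only [mem_insert, mem_singleton, not_or] at hne
          have := half_cos_lt_inner_pentagonVertex (m := m) (j := x.1)
            (fun h => hne.1 (by linear_combination -h)) (fun h => hne.2 (by linear_combination -h))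
            (abs_clusterOffset_le k x.2)
          exact (this.trans_le hx).false
    _ ≤ 2 * k := by rw [Fintype.card_fin]; exact Nat.mul_le_mul_right _ card_le_two

theorem two_points_plane_tight_general (k : ℕ) :
    ∃ P : Finset (EuclideanSpace ℝ (Fin 2)),
      P.card = 5 * k ∧
      (∀ p₁ ∈ P, ∀ p₂ ∈ P, ∀ p₃ ∈ P, p₁ ≠ p₂ → p₁ ≠ p₃ → p₂ ≠ p₃ →
        ¬ Collinear ℝ ({p₁, p₂, p₃} : Set (EuclideanSpace ℝ (Fin 2)))) ∧
      ∀ p₁ p₂ : EuclideanSpace ℝ (Fin 2),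
        ∃ (v : EuclideanSpace ℝ (Fin 2)) (c : ℝ), v ≠ 0 ∧
          ((((inner ℝ v p₁ : ℝ) ≤ c ∨ (inner ℝ v p₂ : ℝ) ≤ c) ∧
              ((P.filter (fun x => (inner ℝ v x : ℝ) ≤ c)).card : ℝ) ≤ (5 * k : ℝ) / 5) ∨
            (((inner ℝ v p₁ : ℝ) ≤ c ∧ (inner ℝ v p₂ : ℝ) ≤ c) ∧
              ((P.filter (fun x => (inner ℝ v x : ℝ) ≤ c)).card : ℝ) ≤ 2 * (5 * k : ℝ) / 5)) := by
  refine ⟨pentagonClusters k, card_pentagonClusters k, fun a ha b hb c hc hab hac hbc => ?_,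
    fun p₁ p₂ => ?_⟩
  · exact affineIndependent_iff_not_collinear_set.1
      ((cospherical_pentagonClusters k).affineIndependent_of_mem_of_ne ha hb hc hab hac hbc)
  by_cases hnear : ∃ m, 1 / 2 ≤ ⟪pentagonVertex m, p₁⟫ ∨ 1 / 2 ≤ ⟪pentagonVertex m, p₂⟫
  · obtain ⟨m, hm⟩ := hnear
    refine ⟨-pentagonVertex m, -(1 / 2), neg_ne_zero.2 (pentagonVertex_ne_zero m), Or.inl ⟨?_, ?_⟩⟩
    · simpa only [inner_neg_left, neg_le_neg_iff] using hm
    · calc _ ≤ (k : ℝ) := by exact_mod_cast card_filter_neg_inner_pentagonVertex_le k m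
        _ = 5 * k / 5 := by ring
  · push Not at hnear
    obtain ⟨m, h₁, h₂⟩ := exists_inner_pentagonVertex_le_and_le (fun j => (hnear j).1)
      (fun j => (hnear j).2)
    refine ⟨pentagonVertex m, cos (2 * π / 5) / 2, pentagonVertex_ne_zero m,
      Or.inr ⟨⟨h₁, h₂⟩, ?_⟩⟩
    calc _ ≤ ((2 * k : ℕ) : ℝ) := by exact_mod_cast card_filter_inner_pentagonVertex_le k m
      _ = 2 * (5 * k) / 5 := by push_cast; ring

/-- For every positive integer `k` there is a set `P` of `n = 5k` points in
general position in the plane witnessing the tightness of the two-point theorem: for every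
pair of points `p₁, p₂ ∈ ℝ²` there is a closed halfplane that either contains one of the two
points but at most `n/5` points of `P`, or contains both points but at most `2n/5` points
of `P`. -/
theorem two_points_plane_tight (k : ℕ) (hk : 0 < k) :
    ∃ P : Finset (EuclideanSpace ℝ (Fin 2)),
      P.card = 5 * k ∧
      (∀ p₁ ∈ P, ∀ p₂ ∈ P, ∀ p₃ ∈ P, p₁ ≠ p₂ → p₁ ≠ p₃ → p₂ ≠ p₃ →
        ¬ Collinear ℝ ({p₁, p₂, p₃} : Set (EuclideanSpace ℝ (Fin 2)))) ∧
      ∀ p₁ p₂ : EuclideanSpace ℝ (Fin 2),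
        ∃ (v : EuclideanSpace ℝ (Fin 2)) (c : ℝ), v ≠ 0 ∧
          ((((inner ℝ v p₁ : ℝ) ≤ c ∨ (inner ℝ v p₂ : ℝ) ≤ c) ∧
              ((P.filter (fun x => (inner ℝ v x : ℝ) ≤ c)).card : ℝ) ≤ (5 * k : ℝ) / 5) ∨
            (((inner ℝ v p₁ : ℝ) ≤ c ∧ (inner ℝ v p₂ : ℝ) ≤ c) ∧
              ((P.filter (fun x => (inner ℝ v x : ℝ) ≤ c)).card : ℝ) ≤ 2 * (5 * k : ℝ) / 5)) :=
  two_points_plane_tight_general k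
end

section
/- Let μ be a mass distribution on ℝ^d with μ(ℝ^d) = 1 and let k be a positive integer. Then there exist k points p₁, …, p_k in ℝ^d whose generalized Tukey depth with respect to μ is at least 1/(kd+1); that is, for every closed halfspace h containing at least one of the points p₁, …, p_k, μ(h) ≥ m/(kd+1), where m is the number of the points p₁, …, p_k contained in h. -/
/-!
Order the nonzero directions by the sign of their first nonzero coordinate. Point `i`
(`0 ≤ i < k`) is chosen so that every closed halfspace `{y | ⟪v, y⟫ ≤ ⟪v, pᵢ⟫}` has mass at least
`(k - i)/(kd + 1)` when `v` is lexicographically positive and `(i + 1)/(kd + 1)` otherwise. A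
halfspace containing the points with indices in `S` contains the halfspace through the smallest
(resp. largest) index of `S`, so its mass is at least `#S/(kd + 1)`.

For fixed `i` the requirement in direction `v` is a closed halfspace, and such a point exists by
Helly's theorem and compactness once any `d + 1` of the (slightly relaxed) constraints are
compatible. If they were not, the complementary open halfspaces would cover `ℝ^d`. When both signs
occur their masses add up to less than `((k + 1) + (d - 1)k)/(kd + 1) = 1`; when only one sign
occurs, all constraints are met far out along a single ray.
-/

open MeasureTheory ProbabilityTheory Set Filter
open scoped RealInnerProductSpace Topology

theorem StieltjesFunction.continuousAt_of_measure_singleton_eq_zero (f : StieltjesFunction ℝ)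
    {a : ℝ} (h : f.measure {a} = 0) : ContinuousAt f a := by
  rw [f.mono.continuousAt_iff_leftLim_eq_rightLim, f.rightLim_eq]
  rw [f.measure_singleton, ENNReal.ofReal_eq_zero, sub_nonpos] at h
  exact le_antisymm (f.mono.leftLim_le le_rfl) h

theorem Convex.helly_theorem_of_isCompact_biInter {ι E : Type*} [AddCommGroup E] [Module ℝ E]
    [TopologicalSpace E] [FiniteDimensional ℝ E] {C : ι → Set E} (hconv : ∀ i, Convex ℝ (C i))
    (hclosed : ∀ i, IsClosed (C i)) {A : Finset ι} (hA : IsCompact (⋂ i ∈ A, C i))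
    (hC : ∀ I : Finset ι, I.card ≤ Module.finrank ℝ E + 1 → (⋂ i ∈ I, C i).Nonempty) :
    (⋂ i, C i).Nonempty := by
  classical
  refine (hA.inter_iInter_nonempty C hclosed fun I => ?_).mono inter_subset_right
  refine (Convex.helly_theorem' (s := A ∪ I) (fun i _ => hconv i) fun J _ hJ => hC J hJ).mono ?_
  simp only [← Finset.mem_coe, Finset.coe_union, biInter_union, subset_rfl]

section DirectionalCDF

variable {E : Type*} [NormedAddCommGroup E] [InnerProductSpace ℝ E] [MeasurableSpace E]
  {μ : Measure E}

variable (μ) in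
noncomputable def directionalCDF (v : E) : StieltjesFunction ℝ := cdf (μ.map fun x => ⟪v, x⟫)

/- When `directionalCDF μ v` is continuous this is the closed halfspace `{x | q ≤ ⟪v, x⟫}`,
`q` being the `β`-quantile of `⟪v, ·⟫`. -/
variable (μ) in
def depthHalfspace (v : E) (β : ℝ) : Set E := {x | β ≤ directionalCDF μ v ⟪v, x⟫}

lemma convex_depthHalfspace (v : E) (β : ℝ) : Convex ℝ (depthHalfspace μ v β) :=
  ((IsUpperSet.ordConnected fun _ _ hst hs => hs.trans ((directionalCDF μ v).mono hst)).convex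
    (s := {t | β ≤ directionalCDF μ v t})).linear_preimage (innerₛₗ ℝ v)

lemma exists_le_inner_of_mem_depthHalfspace (v : E) {β : ℝ} (hβ : 0 < β) :
    ∃ a, ∀ x ∈ depthHalfspace μ v β, a ≤ ⟪v, x⟫ := by
  obtain ⟨a, ha⟩ := eventually_atBot.1 ((tendsto_cdf_atBot _).eventually (gt_mem_nhds hβ))
  exact ⟨a, fun x hx => le_of_not_ge fun hxa => (not_le.2 (ha _ hxa)) hx⟩

lemma eventually_smul_mem_depthHalfspace {v x : E} (hx : 0 < ⟪v, x⟫) {β : ℝ} (hβ : β < 1) :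
    ∀ᶠ s : ℝ in atTop, s • x ∈ depthHalfspace μ v β := by
  have hlim : Tendsto (fun s : ℝ => ⟪v, s • x⟫) atTop atTop := by
    simpa only [real_inner_smul_right, id] using tendsto_id.atTop_mul_const hx
  exact (((tendsto_cdf_atTop _).comp hlim).eventually (lt_mem_nhds hβ)).mono fun _ => le_of_lt

variable [BorelSpace E] [IsProbabilityMeasure μ]

instance (v : E) : IsProbabilityMeasure (μ.map fun x => ⟪v, x⟫) :=
  Measure.isProbabilityMeasure_map (by fun_prop)

lemma directionalCDF_apply (v : E) (t : ℝ) :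
    directionalCDF μ v t = μ.real {x | ⟪v, x⟫ ≤ t} := by
  rw [directionalCDF, cdf_eq_real, map_measureReal_apply (by fun_prop) measurableSet_Iic]
  rfl

lemma continuous_directionalCDF {v : E} (hv : ∀ c, μ {x | ⟪v, x⟫ = c} = 0) :
    Continuous (directionalCDF μ v) := by
  refine continuous_iff_continuousAt.2 fun c => ?_
  apply StieltjesFunction.continuousAt_of_measure_singleton_eq_zero
  rw [directionalCDF, measure_cdf, Measure.map_apply (by fun_prop) (measurableSet_singleton c)]
  exact hv c

lemma isClosed_depthHalfspace {v : E} (hv : ∀ c, μ {x | ⟪v, x⟫ = c} = 0) (β : ℝ) :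
    IsClosed (depthHalfspace μ v β) :=
  isClosed_le continuous_const ((continuous_directionalCDF hv).comp (by fun_prop))

lemma measureReal_compl_depthHalfspace_le {v : E} (hv : ∀ c, μ {x | ⟪v, x⟫ = c} = 0) {β : ℝ}
    (hβ : 0 < β) : μ.real (depthHalfspace μ v β)ᶜ ≤ β := by
  rcases lt_or_ge β 1 with hβ1 | hβ1
  · obtain ⟨t, ht⟩ : β ∈ range (directionalCDF μ v) := by
      refine mem_range_of_exists_le_of_exists_ge (continuous_directionalCDF hv) ?_ ?_
      · exact ((tendsto_cdf_atBot _).eventually (gt_mem_nhds hβ)).exists.imp fun _ => le_of_lt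
      · exact ((tendsto_cdf_atTop _).eventually (lt_mem_nhds hβ1)).exists.imp fun _ => le_of_lt
    calc μ.real (depthHalfspace μ v β)ᶜ ≤ μ.real {x | ⟪v, x⟫ ≤ t} := by
          refine measureReal_mono fun x hx => ?_
          exact ((directionalCDF μ v).mono.reflect_lt (ht ▸ not_le.1 hx)).le
      _ = β := by rw [← directionalCDF_apply, ht]
  · exact measureReal_le_one.trans hβ1

lemma one_le_sum_of_biInter_depthHalfspace_eq_empty {ι : Type*} {J : Finset ι} {v : ι → E}
    {β : ι → ℝ} (hv : ∀ j ∈ J, ∀ c, μ {x | ⟪v j, x⟫ = c} = 0) (hβ : ∀ j ∈ J, 0 < β j)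
    (hJ : ⋂ j ∈ J, depthHalfspace μ (v j) (β j) = ∅) : 1 ≤ ∑ j ∈ J, β j := by
  have hcover : (univ : Set E) = ⋃ j ∈ J, (depthHalfspace μ (v j) (β j))ᶜ := by
    rw [← compl_iInter₂, hJ, compl_empty]
  calc (1 : ℝ) = μ.real univ := probReal_univ.symm
    _ ≤ ∑ j ∈ J, μ.real (depthHalfspace μ (v j) (β j))ᶜ :=
        hcover ▸ measureReal_biUnion_finset_le _ _
    _ ≤ ∑ j ∈ J, β j :=
        Finset.sum_le_sum fun j hj => measureReal_compl_depthHalfspace_le (hv j hj) (hβ j hj)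

end DirectionalCDF

lemma eventually_pos_sum_mul_pow {n : ℕ} {w : Fin n → ℝ} (hw : 0 < toLex w) :
    ∀ᶠ δ in 𝓝[>] (0 : ℝ), 0 < ∑ j, w j * δ ^ (j : ℕ) := by
  obtain ⟨i, hzero, hpos⟩ := hw
  replace hzero : ∀ j < i, w j = 0 := fun j hj => (hzero j hj).symm
  set h : ℝ → ℝ := fun δ => ∑ j, w j * δ ^ ((j : ℕ) - i)
  have hfactor : ∀ δ, ∑ j, w j * δ ^ (j : ℕ) = δ ^ (i : ℕ) * h δ := by
    intro δ
    rw [Finset.mul_sum]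
    refine Finset.sum_congr rfl fun j _ => ?_
    rcases lt_or_ge j i with hj | hj
    · simp [hzero j hj]
    · rw [mul_left_comm, ← pow_add, Nat.add_sub_cancel' hj]
  have h0 : h 0 = w i := by
    refine (Finset.sum_eq_single i (fun j _ hji => ?_) (by simp)).trans (by simp)
    rcases lt_or_gt_of_ne hji with hj | hj
    · simp [hzero j hj]
    · simp [zero_pow (Nat.sub_ne_zero_of_lt hj)]
  have hnear : ∀ᶠ δ in 𝓝 0, 0 < h δ :=
    (show Continuous h by fun_prop).continuousAt.eventually (lt_mem_nhds (h0 ▸ hpos))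
  filter_upwards [nhdsWithin_le_nhds hnear, self_mem_nhdsWithin] with δ hδ (hδ0 : 0 < δ)
  rw [hfactor]
  exact mul_pos (pow_pos hδ0 _) hδ

lemma exists_forall_inner_pos_of_toLex_pos {ι : Type*} {d : ℕ} {J : Finset ι}
    {v : ι → EuclideanSpace ℝ (Fin d)} (hv : ∀ j ∈ J, 0 < toLex (v j).ofLp) :
    ∃ x, ∀ j ∈ J, 0 < ⟪v j, x⟫ := by
  obtain ⟨δ, hδ⟩ := (J.eventually_all.2 fun j hj => eventually_pos_sum_mul_pow (hv j hj)).exists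
  refine ⟨WithLp.toLp 2 fun j => δ ^ (j : ℕ), fun j hj => ?_⟩
  simpa [PiLp.inner_apply, mul_comm] using hδ j hj

lemma toLex_ofLp_neg_pos {d : ℕ} {v : EuclideanSpace ℝ (Fin d)} (hv : v ≠ 0)
    (h : ¬ 0 < toLex v.ofLp) : 0 < toLex (-v).ofLp := by
  rw [WithLp.ofLp_neg, toLex_neg, neg_pos]
  exact lt_of_le_of_ne (not_lt.1 h) (by simpa using hv)

theorem EuclideanSpace.isCompact_of_isClosed_of_forall_mem_Icc {d : ℕ}
    {S : Set (EuclideanSpace ℝ (Fin d))} (hS : IsClosed S) (a b : Fin d → ℝ)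
    (h : ∀ x ∈ S, ∀ j, x j ∈ Icc (a j) (b j)) : IsCompact S :=
  ((isCompact_univ_pi fun j => isCompact_Icc).image
    (EuclideanSpace.equiv (Fin d) ℝ).symm.continuous).of_isClosed_subset hS
    fun x hx => ⟨EuclideanSpace.equiv (Fin d) ℝ x, fun j _ => h x hx j, by simp⟩

open scoped Classical in
noncomputable def depthCount (k : ℕ) (i : Fin k) {d : ℕ} (v : EuclideanSpace ℝ (Fin d)) : ℕ :=
  if 0 < toLex v.ofLp then k - i else i + 1

lemma depthCount_le {k d : ℕ} (i : Fin k) (v : EuclideanSpace ℝ (Fin d)) :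
    depthCount k i v ≤ k := by
  unfold depthCount; split_ifs <;> omega

lemma one_le_depthCount {k d : ℕ} (i : Fin k) (v : EuclideanSpace ℝ (Fin d)) :
    1 ≤ depthCount k i v := by
  unfold depthCount; split_ifs <;> omega

lemma sum_depthCount_le {ι : Type*} {k d : ℕ} (i : Fin k) {J : Finset ι}
    {v : ι → EuclideanSpace ℝ (Fin d)} (hJ : J.card ≤ d + 1)
    (hpos : ∃ j ∈ J, 0 < toLex (v j).ofLp) (hneg : ∃ j ∈ J, ¬ 0 < toLex (v j).ofLp) :
    ∑ j ∈ J, depthCount k i (v j) ≤ k * d + 1 := by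
  classical
  obtain ⟨j₁, hj₁, hpos₁⟩ := hpos
  obtain ⟨j₂, hj₂, hneg₂⟩ := hneg
  have hne : j₂ ≠ j₁ := fun h => hneg₂ (h ▸ hpos₁)
  have hj₂' : j₂ ∈ J.erase j₁ := Finset.mem_erase.2 ⟨hne, hj₂⟩
  have hrest := Finset.sum_le_card_nsmul ((J.erase j₁).erase j₂) (fun j => depthCount k i (v j)) k
    fun j _ => depthCount_le i (v j)
  rw [Finset.card_erase_of_mem hj₂', Finset.card_erase_of_mem hj₁, smul_eq_mul] at hrest
  rw [← Finset.add_sum_erase J _ hj₁, ← Finset.add_sum_erase _ _ hj₂']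
  rw [show depthCount k i (v j₁) = k - i from if_pos hpos₁,
    show depthCount k i (v j₂) = i + 1 from if_neg hneg₂]
  have hcard : 0 < J.card - 1 := Finset.card_erase_of_mem hj₁ ▸ Finset.card_pos.2 ⟨j₂, hj₂'⟩
  obtain ⟨d, rfl⟩ : ∃ d', d = d' + 1 := ⟨d - 1, by omega⟩
  have hrest' : (J.card - 1 - 1) * k ≤ d * k := Nat.mul_le_mul_right _ (by omega)
  rw [mul_add, mul_one, mul_comm k d]
  have := i.2
  omega

lemma exists_mem_card_le_depthCount {k d : ℕ} {S : Finset (Fin k)} (hS : S.Nonempty)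
    (v : EuclideanSpace ℝ (Fin d)) : ∃ i ∈ S, S.card ≤ depthCount k i v := by
  by_cases hv : 0 < toLex v.ofLp
  · refine ⟨S.min' hS, S.min'_mem hS, ?_⟩
    rw [depthCount, if_pos hv, ← Fin.card_Ici]
    exact Finset.card_le_card fun i hi => Finset.mem_Ici.2 (S.min'_le i hi)
  · refine ⟨S.max' hS, S.max'_mem hS, ?_⟩
    rw [depthCount, if_neg hv, ← Fin.card_Iic]
    exact Finset.card_le_card fun i hi => Finset.mem_Iic.2 (S.le_max' i hi)

section DepthPoints

variable {d k : ℕ} {μ : Measure (EuclideanSpace ℝ (Fin d))} [IsProbabilityMeasure μ]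

lemma depthCount_div_lt_one {i : Fin k} {v : EuclideanSpace ℝ (Fin d)} (hv : v ≠ 0) :
    (depthCount k i v : ℝ) / (k * d + 1) < 1 := by
  have hd : 0 < d := by
    simpa using Module.finrank_pos_iff_exists_ne_zero (R := ℝ) |>.2 ⟨v, hv⟩
  rw [div_lt_one (by positivity)]
  have : (depthCount k i v : ℝ) ≤ k := by exact_mod_cast depthCount_le i v
  have : (1 : ℝ) ≤ d := by exact_mod_cast hd
  nlinarith

lemma nonempty_biInter_depthHalfspace
    (hnull : ∀ (v : EuclideanSpace ℝ (Fin d)) (c : ℝ), v ≠ 0 → μ {x | ⟪v, x⟫ = c} = 0)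
    (i : Fin k) {ι : Type*} {J : Finset ι} {v : ι → EuclideanSpace ℝ (Fin d)} {β : ι → ℝ}
    (hv : ∀ j ∈ J, v j ≠ 0)
    (hβ : ∀ j ∈ J, 0 < β j ∧ β j < depthCount k i (v j) / (k * d + 1))
    (hJ : J.card ≤ d + 1) :
    (⋂ j ∈ J, depthHalfspace μ (v j) (β j)).Nonempty := by
  by_cases hmixed : (∃ j ∈ J, 0 < toLex (v j).ofLp) ∧ ∃ j ∈ J, ¬ 0 < toLex (v j).ofLp
  · obtain ⟨hpos, hneg⟩ := hmixed
    rw [nonempty_iff_ne_empty]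
    intro hempty
    have hmass := one_le_sum_of_biInter_depthHalfspace_eq_empty
      (fun j hj c => hnull _ c (hv j hj)) (fun j hj => (hβ j hj).1) hempty
    have hlt := Finset.sum_lt_sum_of_nonempty (hpos.imp fun _ h => h.1) fun j hj => (hβ j hj).2
    have hcount : ∑ j ∈ J, (depthCount k i (v j) : ℝ) / (k * d + 1) ≤ 1 := by
      rw [← Finset.sum_div, div_le_one (by positivity)]
      exact_mod_cast sum_depthCount_le i hJ hpos hneg
    linarith
  · obtain ⟨x, hx⟩ : ∃ x, ∀ j ∈ J, 0 < ⟪v j, x⟫ := by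
      rcases not_and_or.1 hmixed with hneg | hpos
      · push Not at hneg
        obtain ⟨x, hx⟩ := exists_forall_inner_pos_of_toLex_pos
          fun j hj => toLex_ofLp_neg_pos (hv j hj) (hneg j hj)
        exact ⟨-x, fun j hj => by simpa [inner_neg_left, inner_neg_right] using hx j hj⟩
      · push Not at hpos
        exact exists_forall_inner_pos_of_toLex_pos hpos
    obtain ⟨s, hs⟩ := (J.eventually_all.2 fun j hj => eventually_smul_mem_depthHalfspace (μ := μ)
      (hx j hj) ((hβ j hj).2.trans (depthCount_div_lt_one (hv j hj)))).exists
    exact ⟨s • x, mem_iInter₂.2 hs⟩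

lemma exists_forall_depthCount_le
    (hnull : ∀ (v : EuclideanSpace ℝ (Fin d)) (c : ℝ), v ≠ 0 → μ {x | ⟪v, x⟫ = c} = 0)
    (i : Fin k) :
    ∃ x : EuclideanSpace ℝ (Fin d), ∀ v, v ≠ 0 →
      (depthCount k i v : ℝ) / (k * d + 1) ≤ directionalCDF μ v ⟪v, x⟫ := by
  classical
  set w : EuclideanSpace ℝ (Fin d) → ℝ := fun v => depthCount k i v / (k * d + 1)
  have hw : ∀ v, 0 < w v := fun v =>
    div_pos (by exact_mod_cast one_le_depthCount i v) (by positivity)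
  let ι := {p : EuclideanSpace ℝ (Fin d) × ℝ // p.1 ≠ 0 ∧ 0 < p.2 ∧ p.2 < w p.1}
  let C : ι → Set (EuclideanSpace ℝ (Fin d)) := fun p => depthHalfspace μ p.1.1 p.1.2
  have hclosed : ∀ p, IsClosed (C p) := fun p => isClosed_depthHalfspace (hnull _ · p.2.1) _
  -- the constraints in the directions `±eⱼ` confine the common points to a box
  let axis : Fin d × Bool → ι := fun ⟨j, b⟩ =>
    let u := EuclideanSpace.single j (if b then 1 else -1 : ℝ)
    ⟨(u, w u / 2), by cases b <;> simp [u], half_pos (hw u), half_lt_self (hw u)⟩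
  have hcompact : IsCompact (⋂ p ∈ Finset.univ.image axis, C p) := by
    choose a ha using fun jb =>
      exists_le_inner_of_mem_depthHalfspace (μ := μ) (axis jb).1.1 (axis jb).2.2.1
    refine EuclideanSpace.isCompact_of_isClosed_of_forall_mem_Icc
      (isClosed_biInter fun p _ => hclosed p) (fun j => a (j, true)) (fun j => -a (j, false))
      fun x hx j => ?_
    have h : ∀ b, a (j, b) ≤ ⟪(axis (j, b)).1.1, x⟫ := fun b =>
      ha (j, b) x (mem_iInter₂.1 hx (axis (j, b))
        (Finset.mem_image_of_mem axis (Finset.mem_univ (j, b))))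
    have ht := h true
    have hf := h false
    simp only [↓reduceIte, EuclideanSpace.inner_single_left, Real.ringHom_apply, one_mul,
      Bool.false_eq_true, neg_mul, axis] at ht hf
    exact ⟨ht, by linarith⟩
  obtain ⟨x, hx⟩ := Convex.helly_theorem_of_isCompact_biInter (C := C)
    (fun p => convex_depthHalfspace _ _) hclosed hcompact fun I hI =>
      nonempty_biInter_depthHalfspace hnull i (fun p _ => p.2.1) (fun p _ => p.2.2)
        (by simpa using hI)
  refine ⟨x, fun v hv => le_of_forall_lt_imp_le_of_dense fun β hβ => ?_⟩
  rcases le_or_gt β 0 with hβ0 | hβ0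
  · exact hβ0.trans (cdf_nonneg _ _)
  · exact mem_iInter.1 hx ⟨(v, β), hv, hβ0, hβ⟩

end DepthPoints

theorem generalized_tukey_depth_general (d k : ℕ)
    (μ : MeasureTheory.Measure (EuclideanSpace ℝ (Fin d)))
    [MeasureTheory.IsProbabilityMeasure μ]
    (hnull : ∀ (v : EuclideanSpace ℝ (Fin d)) (c : ℝ), v ≠ 0 →
      μ {x | (inner ℝ v x : ℝ) = c} = 0) :
    ∃ p : Fin k → EuclideanSpace ℝ (Fin d),
      ∀ (v : EuclideanSpace ℝ (Fin d)) (c : ℝ), v ≠ 0 →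
        1 ≤ (Finset.univ.filter (fun i => (inner ℝ v (p i) : ℝ) ≤ c)).card →
        ENNReal.ofReal
            (((Finset.univ.filter (fun i => (inner ℝ v (p i) : ℝ) ≤ c)).card : ℝ) /
              (k * d + 1)) ≤
          μ {x | (inner ℝ v x : ℝ) ≤ c} := by
  choose p hp using exists_forall_depthCount_le (k := k) hnull
  refine ⟨p, fun v c hv hS => ?_⟩
  obtain ⟨i, hi, hcard⟩ := exists_mem_card_le_depthCount (Finset.card_pos.1 hS) v
  calc _ ≤ ENNReal.ofReal (depthCount k i v / (k * d + 1)) := by gcongr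
    _ ≤ ENNReal.ofReal (directionalCDF μ v ⟪v, p i⟫) := ENNReal.ofReal_le_ofReal (hp i v hv)
    _ = μ {x | ⟪v, x⟫ ≤ ⟪v, p i⟫} := by rw [directionalCDF_apply, ofReal_measureReal]
    _ ≤ μ {x | ⟪v, x⟫ ≤ c} := measure_mono fun x hx => hx.trans (Finset.mem_filter.1 hi).2

/-- For any mass distribution `μ` on `ℝ^d` and any positive integer `k`,
there are `k` points `p₁, …, p_k` whose generalized Tukey depth is at least `1/(kd+1)`:
every closed halfspace containing `m ≥ 1` of the points has `μ`-mass at least `m/(kd+1)`. -/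
theorem generalized_tukey_depth (d k : ℕ) (hk : 0 < k)
    (μ : MeasureTheory.Measure (EuclideanSpace ℝ (Fin d)))
    [MeasureTheory.IsProbabilityMeasure μ]
    (hnull : ∀ (v : EuclideanSpace ℝ (Fin d)) (c : ℝ), v ≠ 0 →
      μ {x | (inner ℝ v x : ℝ) = c} = 0) :
    ∃ p : Fin k → EuclideanSpace ℝ (Fin d),
      ∀ (v : EuclideanSpace ℝ (Fin d)) (c : ℝ), v ≠ 0 →
        1 ≤ (Finset.univ.filter (fun i => (inner ℝ v (p i) : ℝ) ≤ c)).card →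
        ENNReal.ofReal
            (((Finset.univ.filter (fun i => (inner ℝ v (p i) : ℝ) ≤ c)).card : ℝ) /
              (k * d + 1)) ≤
          μ {x | (inner ℝ v x : ℝ) ≤ c} :=
  generalized_tukey_depth_general d k μ hnull
end

section
/- Let P be a set of n points in ℝ^d. Let α₁, …, α_k be non-negative real numbers such that α₁ ≤ α₂ ≤ … ≤ α_k and for every i, j with i + j ≤ k + 1 we have (d−1)·α_k + α_i + α_j ≤ 1. Then there exist k points p₁, …, p_k in ℝ^d such that for every j with 1 ≤ j ≤ k, every closed halfspace that contains at least j of the points p₁, …, p_k contains at least α_j·n of the points of P. -/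
open Finset Module Filter
open scoped RealInnerProductSpace

/-!
Fix a direction `u ≠ 0`. For each `i` we find a point `p i` such that every closed halfspace
`{x | ⟪v, x⟫ ≤ ⟪v, p i⟫}` with `⟪v, u⟫ ≥ 0` contains at least `α i * n` points of `P`, and
every one with `⟪v, u⟫ ≤ 0` at least `α (rev i) * n`. A halfspace containing `j + 1` of the
`p i` contains one with `j ≤ i` or one with `j ≤ rev i`, according to the sign of `⟪v, u⟫`.

Such a `p i` is a common point of infinitely many closed convex "depth regions"; by Helly's
theorem and compactness of the convex hull of `P` it suffices to meet `d + 1` of them. A family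
of total weight at most one is met by a point of `P`: in any direction `v`, fewer than `t`
points `x ∈ P` have fewer than `t` points of `P` in `{y | ⟪v, y⟫ ≤ ⟪v, x⟫}`. The hypothesis on
`α` bounds the weight except when all constraints lie on one side of `u`; then those orthogonal
to `u` are met by Helly's theorem in `uᗮ`, where `d` of them suffice, and the others by moving
far in the direction `u`.
-/

section Helly

variable {ι E : Type*} [AddCommGroup E] [Module ℝ E] [TopologicalSpace E]
  [FiniteDimensional ℝ E]

theorem Convex.helly_theorem_inter_compact {K : Set E} {F : ι → Set E}
    (hK : IsCompact K) (hK_convex : Convex ℝ K) (hF_convex : ∀ i, Convex ℝ (F i))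
    (hF_closed : ∀ i, IsClosed (F i))
    (hK_inter : ∀ I : Finset ι, #I ≤ finrank ℝ E → (K ∩ ⋂ i ∈ I, F i).Nonempty)
    (h_inter : ∀ I : Finset ι, #I ≤ finrank ℝ E + 1 → (⋂ i ∈ I, F i).Nonempty) :
    (K ∩ ⋂ i, F i).Nonempty := by
  refine hK.inter_iInter_nonempty F hF_closed fun t => ?_
  obtain ⟨p, hp⟩ := Convex.helly_theorem' (𝕜 := ℝ) (F := fun o : Option ι => o.elim K F)
    (s := t.insertNone) (by rintro (_ | i) _ <;> simp [hK_convex, hF_convex]) fun I _ hI => by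
      by_cases hnone : none ∈ I
      · obtain ⟨p, hpK, hp⟩ :=
          hK_inter I.eraseNone (by rw [card_eraseNone_of_mem hnone]; omega)
        refine ⟨p, Set.mem_iInter₂.2 ?_⟩
        rintro (_ | i) hi
        · exact hpK
        · exact Set.mem_iInter₂.1 hp i (mem_eraseNone.2 hi)
      · obtain ⟨p, hp⟩ := h_inter I.eraseNone (by rwa [card_eraseNone_of_not_mem hnone])
        refine ⟨p, Set.mem_iInter₂.2 ?_⟩
        rintro (_ | i) hi
        · exact absurd hi hnone
        · exact Set.mem_iInter₂.1 hp i (mem_eraseNone.2 hi)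
  simp only [Set.mem_iInter₂, forall_mem_insertNone, Option.elim] at hp
  exact ⟨p, hp.1, Set.mem_iInter₂.2 hp.2⟩

end Helly

theorem Finset.card_filter_rank_lt_of_nonempty {α β : Type*} [LinearOrder β] (P : Finset α)
    (f : α → β) {t : ℝ} (h : {x ∈ P | (#{y ∈ P | f y ≤ f x} : ℝ) < t}.Nonempty) :
    (#{x ∈ P | (#{y ∈ P | f y ≤ f x} : ℝ) < t} : ℝ) < t := by
  obtain ⟨x, hx, hmax⟩ := exists_max_image _ f h
  calc (#{x ∈ P | (#{y ∈ P | f y ≤ f x} : ℝ) < t} : ℝ) ≤ #{y ∈ P | f y ≤ f x} := by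
        exact_mod_cast card_le_card fun y hy => mem_filter.2 ⟨(mem_filter.1 hy).1, hmax y hy⟩
    _ < t := (mem_filter.1 hx).2

theorem natCast_mul_add_natCast_mul_le_one {d L R : ℕ} {a b : ℝ} (ha : 0 ≤ a) (hb : 0 ≤ b)
    (hab : ((d : ℝ) - 1) * max a b + a + b ≤ 1)
    (hLR : L + R ≤ d ∨ 0 < L ∧ 0 < R ∧ L + R ≤ d + 1) : L * a + R * b ≤ 1 := by
  have haM := le_max_left a b
  have hbM := le_max_right a b
  have hM : max a b ≤ a + b := max_le (by linarith) (by linarith)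
  rcases hLR with hLR | ⟨hL, hR, hLR⟩
  · have hLR' : (L : ℝ) + R ≤ d := by exact_mod_cast hLR
    nlinarith [mul_le_mul_of_nonneg_left haM (Nat.cast_nonneg (α := ℝ) L),
      mul_le_mul_of_nonneg_left hbM (Nat.cast_nonneg (α := ℝ) R)]
  · have hLR' : (L : ℝ) + R ≤ d + 1 := by exact_mod_cast hLR
    have hL' : (1 : ℝ) ≤ L := by exact_mod_cast hL
    have hR' : (1 : ℝ) ≤ R := by exact_mod_cast hR
    nlinarith [mul_le_mul_of_nonneg_left haM (by linarith : (0 : ℝ) ≤ L - 1),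
      mul_le_mul_of_nonneg_left hbM (by linarith : (0 : ℝ) ≤ R - 1)]

section Depth

variable {ι E : Type*} [NormedAddCommGroup E] [InnerProductSpace ℝ E]

def depthRegion (P : Finset E) (v : E) (t : ℝ) : Set E :=
  {p | t ≤ #{y ∈ P | ⟪v, y⟫ ≤ ⟪v, p⟫}}

variable {P : Finset E} {v : E} {t : ℝ}

theorem depthRegion_anti (P : Finset E) (v : E) : Antitone (depthRegion P v) :=
  fun _ _ h _ hp => h.trans hp

theorem card_filter_inner_le_mono (P : Finset E) (v : E) :
    Monotone fun s : ℝ => #{y ∈ P | ⟪v, y⟫ ≤ s} :=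
  fun _ _ hs => card_le_card <| monotone_filter_right P fun _ _ hy => le_trans hy hs

theorem le_card_filter_of_mem_depthRegion {p : E} (hp : p ∈ depthRegion P v t) {c : ℝ}
    (hc : ⟪v, p⟫ ≤ c) : t ≤ #{y ∈ P | ⟪v, y⟫ ≤ c} :=
  hp.trans <| by exact_mod_cast card_filter_inner_le_mono P v hc

theorem mem_depthRegion_of_forall_inner_le {p : E} (hp : ∀ y ∈ P, ⟪v, y⟫ ≤ ⟪v, p⟫)
    (ht : t ≤ #P) : p ∈ depthRegion P v t := by
  rwa [depthRegion, Set.mem_ofPred_eq, filter_true_of_mem hp]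

theorem convex_depthRegion : Convex ℝ (depthRegion P v t) := by
  have hup : IsUpperSet {s : ℝ | t ≤ #{y ∈ P | ⟪v, y⟫ ≤ s}} := fun _ _ hs (h : t ≤ _) =>
    h.trans <| by exact_mod_cast card_filter_inner_le_mono P v hs
  exact hup.ordConnected.convex.linear_preimage (innerₛₗ ℝ v)

theorem isClosed_depthRegion : IsClosed (depthRegion P v t) := by
  have h : depthRegion P v t =
      ⋃ S ∈ {S ∈ P.powerset | t ≤ #S}, ⋂ y ∈ S, {p | ⟪v, y⟫ ≤ ⟪v, p⟫} := by
    ext p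
    simp only [depthRegion, Set.mem_ofPred_eq, Set.mem_iUnion, Set.mem_iInter, mem_filter,
      mem_powerset, exists_prop]
    refine ⟨fun hp => ⟨_, ⟨filter_subset _ _, hp⟩, fun y hy => (mem_filter.1 hy).2⟩,
      fun ⟨S, ⟨hSP, hS⟩, hSp⟩ => hS.trans ?_⟩
    exact_mod_cast card_le_card fun y hy => mem_filter.2 ⟨hSP hy, hSp y hy⟩
  rw [h]
  exact isClosed_biUnion_finset fun S _ => isClosed_biInter fun y _ =>
    isClosed_le continuous_const (continuous_const.inner continuous_id)

theorem exists_mem_iInter_depthRegion_of_sum_le_one (hP : P.Nonempty) {s : Finset ι}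
    (v : ι → E) {τ : ι → ℝ} (hτ : ∀ i ∈ s, 0 ≤ τ i) (hsum : ∑ i ∈ s, τ i ≤ 1) :
    ∃ x ∈ P, ∀ i ∈ s, x ∈ depthRegion P (v i) (τ i * #P) := by
  classical
  by_contra! hcover
  set shallow : ι → Finset E :=
    fun i => {x ∈ P | (#{y ∈ P | ⟪v i, y⟫ ≤ ⟪v i, x⟫} : ℝ) < τ i * #P}
  have hcov : P ⊆ s.biUnion shallow := fun x hx => by
    obtain ⟨i, hi, hxi⟩ := hcover x hx
    exact mem_biUnion.2 ⟨i, hi, mem_filter.2 ⟨hx, not_le.1 hxi⟩⟩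
  obtain ⟨i₀, hi₀, hne⟩ : ∃ i ∈ s, (shallow i).Nonempty := by
    obtain ⟨x, hx⟩ := hP
    obtain ⟨i, hi, hxi⟩ := mem_biUnion.1 (hcov hx)
    exact ⟨i, hi, x, hxi⟩
  have hle : ∀ i ∈ s, (#(shallow i) : ℝ) ≤ τ i * #P := fun i hi =>
    (shallow i).eq_empty_or_nonempty.elim
      (fun h => by
        rw [h, card_empty, Nat.cast_zero]
        exact mul_nonneg (hτ i hi) (by positivity))
      (fun h => (card_filter_rank_lt_of_nonempty P _ h).le)
  have : (#P : ℝ) < #P := calc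
    (#P : ℝ) ≤ ∑ i ∈ s, (#(shallow i) : ℝ) := by
      exact_mod_cast (card_le_card hcov).trans card_biUnion_le
    _ < ∑ i ∈ s, τ i * #P := sum_lt_sum hle ⟨i₀, hi₀, card_filter_rank_lt_of_nonempty P _ hne⟩
    _ = (∑ i ∈ s, τ i) * #P := (sum_mul ..).symm
    _ ≤ #P := mul_le_of_le_one_left (by positivity) hsum
  exact lt_irrefl _ this

theorem exists_mem_depthRegion_sumElim {A B : Type*} (vA : A → E) (vB : B → E)
    (hP : P.Nonempty) {a b : ℝ} (ha : 0 ≤ a) (hb : 0 ≤ b)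
    (hab : ((finrank ℝ E : ℝ) - 1) * max a b + a + b ≤ 1) (I : Finset (A ⊕ B))
    (hI : #I.toLeft + #I.toRight ≤ finrank ℝ E ∨
      0 < #I.toLeft ∧ 0 < #I.toRight ∧ #I.toLeft + #I.toRight ≤ finrank ℝ E + 1) :
    ∃ x ∈ P, ∀ i ∈ I,
      x ∈ depthRegion P (Sum.elim vA vB i) (Sum.elim (fun _ => a) (fun _ => b) i * #P) := by
  refine exists_mem_iInter_depthRegion_of_sum_le_one hP _
    (by rintro (_ | _) _ <;> assumption) ?_
  rw [← toLeft_disjSum_toRight (u := I), sum_disjSum]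
  simpa using natCast_mul_add_natCast_mul_le_one ha hb hab hI

variable [FiniteDimensional ℝ E]

theorem exists_mem_iInter_depthRegion_of_forall_mem (U : Submodule ℝ E) (hP : P.Nonempty)
    {s : Finset ι} {v : ι → E} (hv : ∀ i ∈ s, v i ∈ U) {τ : ℝ} (hτ : 0 ≤ τ)
    (hτU : (finrank ℝ U + 1) * τ ≤ 1) :
    (⋂ i ∈ s, depthRegion P (v i) (τ * #P)).Nonempty := by
  obtain ⟨q, hq⟩ := Convex.helly_theorem' (𝕜 := ℝ) (s := s)
    (F := fun i => U.subtype ⁻¹' depthRegion P (v i) (τ * #P))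
    (fun i _ => convex_depthRegion.linear_preimage U.subtype) fun I hIs hI => by
      obtain ⟨x, -, hx⟩ := exists_mem_iInter_depthRegion_of_sum_le_one hP v (s := I)
        (fun _ _ => hτ) (by
          rw [sum_const, nsmul_eq_mul]
          exact le_trans (mul_le_mul_of_nonneg_right (by exact_mod_cast hI) hτ) hτU)
      refine ⟨U.orthogonalProjectionOnto x, Set.mem_iInter₂.2 fun i hi => ?_⟩
      have hinner : ⟪v i, U.starProjection x⟫ = ⟪v i, x⟫ := by
        rw [← U.inner_starProjection_left_eq_right,
          U.starProjection_eq_self_iff.2 (hv i (hIs hi))]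
      simpa [depthRegion, hinner] using hx i hi
  exact ⟨q, by simpa using hq⟩

theorem exists_mem_iInter_depthRegion_of_inner_nonneg {u : E} (hu : u ≠ 0) (hP : P.Nonempty)
    {s : Finset ι} {v : ι → E} (hv : ∀ i ∈ s, 0 ≤ ⟪v i, u⟫) {τ : ℝ} (hτ : 0 ≤ τ)
    (hτE : finrank ℝ E * τ ≤ 1) :
    (⋂ i ∈ s, depthRegion P (v i) (τ * #P)).Nonempty := by
  have hrank : finrank ℝ (ℝ ∙ u)ᗮ + 1 = finrank ℝ E := by
    rw [← finrank_span_singleton (K := ℝ) hu, add_comm,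
      Submodule.finrank_add_finrank_orthogonal]
  obtain ⟨q, hq⟩ := exists_mem_iInter_depthRegion_of_forall_mem (ℝ ∙ u)ᗮ hP
    (s := {i ∈ s | ⟪v i, u⟫ = 0}) (v := v)
    (fun i hi => Submodule.mem_orthogonal_singleton_iff_inner_right.2 <|
      real_inner_comm u (v i) ▸ (mem_filter.1 hi).2)
    hτ (by exact_mod_cast hrank ▸ hτE)
  have hτ₁ : τ * #P ≤ #P := by
    have : Nontrivial E := ⟨⟨u, 0, hu⟩⟩
    have hE : (1 : ℝ) ≤ finrank ℝ E := by exact_mod_cast finrank_pos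
    exact mul_le_of_le_one_left (by positivity) (le_trans (le_mul_of_one_le_left hτ hE) hτE)
  have hfar : ∀ i ∈ s, ∀ᶠ r : ℝ in atTop, q + r • u ∈ depthRegion P (v i) (τ * #P) := by
    intro i hi
    rcases (hv i hi).eq_or_lt with h₀ | hpos
    · refine Eventually.of_forall fun r => ?_
      have hinner : ⟪v i, q + r • u⟫ = ⟪v i, q⟫ := by
        rw [inner_add_right, real_inner_smul_right, ← h₀, mul_zero, add_zero]
      simpa [depthRegion, hinner] using Set.mem_iInter₂.1 hq i (mem_filter.2 ⟨hi, h₀.symm⟩)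
    · have htend : Tendsto (fun r : ℝ => ⟪v i, q + r • u⟫) atTop atTop := by
        simp_rw [inner_add_right, real_inner_smul_right]
        exact tendsto_atTop_add_const_left _ _ (tendsto_id.atTop_mul_const hpos)
      filter_upwards [(eventually_all_finset P).2 fun y _ => htend.eventually_ge_atTop ⟪v i, y⟫]
        with r hr
      exact mem_depthRegion_of_forall_inner_le hr hτ₁
  obtain ⟨r, hr⟩ := ((eventually_all_finset s).2 hfar).exists
  exact ⟨q + r • u, Set.mem_iInter₂.2 hr⟩

theorem exists_two_sided_deep_point {u : E} (hu : u ≠ 0) (hP : P.Nonempty) {a b : ℝ}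
    (ha : 0 ≤ a) (hb : 0 ≤ b) (hab : ((finrank ℝ E : ℝ) - 1) * max a b + a + b ≤ 1) :
    ∃ p : E, (∀ v, 0 ≤ ⟪v, u⟫ → p ∈ depthRegion P v (a * #P)) ∧
      ∀ v, ⟪v, u⟫ ≤ 0 → p ∈ depthRegion P v (b * #P) := by
  let ι := {v : E // 0 ≤ ⟪v, u⟫} ⊕ {v : E // ⟪v, u⟫ ≤ 0}
  let F : ι → Set E := fun i =>
    depthRegion P (Sum.elim (↑) (↑) i) (Sum.elim (fun _ => a) (fun _ => b) i * #P)
  have hK_inter (I : Finset ι) (hI : #I ≤ finrank ℝ E) :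
      (convexHull ℝ ↑P ∩ ⋂ i ∈ I, F i).Nonempty := by
    obtain ⟨x, hxP, hx⟩ := exists_mem_depthRegion_sumElim _ _ hP ha hb hab I
      (.inl (card_toLeft_add_card_toRight ▸ hI))
    exact ⟨x, subset_convexHull ℝ _ hxP, Set.mem_iInter₂.2 hx⟩
  have hda : finrank ℝ E * a ≤ 1 := by
    simpa using natCast_mul_add_natCast_mul_le_one (L := finrank ℝ E) (R := 0) ha hb hab
      (.inl le_rfl)
  have hdb : finrank ℝ E * b ≤ 1 := by
    simpa using natCast_mul_add_natCast_mul_le_one (L := 0) (R := finrank ℝ E) ha hb hab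
      (.inl (zero_add _).le)
  have h_inter (I : Finset ι) (hI : #I ≤ finrank ℝ E + 1) : (⋂ i ∈ I, F i).Nonempty := by
    rw [← card_toLeft_add_card_toRight] at hI
    rcases I.toRight.eq_empty_or_nonempty with hR | hR
    · obtain ⟨q, hq⟩ := exists_mem_iInter_depthRegion_of_inner_nonneg hu hP (s := I.toLeft)
        (v := Subtype.val) (fun v _ => v.2) ha hda
      refine ⟨q, Set.mem_iInter₂.2 ?_⟩
      rintro (v | v) hi
      · exact Set.mem_iInter₂.1 hq v (mem_toLeft.2 hi)
      · exact absurd (mem_toRight.2 hi) (hR ▸ notMem_empty _)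
    rcases I.toLeft.eq_empty_or_nonempty with hL | hL
    · obtain ⟨q, hq⟩ := exists_mem_iInter_depthRegion_of_inner_nonneg (neg_ne_zero.2 hu) hP
        (s := I.toRight) (v := Subtype.val)
        (fun v _ => by rw [inner_neg_right]; exact neg_nonneg.2 v.2) hb hdb
      refine ⟨q, Set.mem_iInter₂.2 ?_⟩
      rintro (v | v) hi
      · exact absurd (mem_toLeft.2 hi) (hL ▸ notMem_empty _)
      · exact Set.mem_iInter₂.1 hq v (mem_toRight.2 hi)
    obtain ⟨x, -, hx⟩ := exists_mem_depthRegion_sumElim _ _ hP ha hb hab I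
      (.inr ⟨hL.card_pos, hR.card_pos, hI⟩)
    exact ⟨x, Set.mem_iInter₂.2 hx⟩
  obtain ⟨p, -, hp⟩ := Convex.helly_theorem_inter_compact
    (P.finite_toSet.isCompact_convexHull (𝕜 := ℝ)) (convex_convexHull ℝ _)
    (fun _ => convex_depthRegion) (fun _ => isClosed_depthRegion) hK_inter h_inter
  exact ⟨p, fun v hv => Set.mem_iInter.1 hp (.inl ⟨v, hv⟩),
    fun v hv => Set.mem_iInter.1 hp (.inr ⟨v, hv⟩)⟩

end Depth

theorem Fin.exists_mem_le_of_lt_card {k : ℕ} (s : Finset (Fin k)) (j : Fin k)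
    (h : (j : ℕ) < #s) : ∃ i ∈ s, j ≤ i := by
  by_contra! hs
  have := card_le_card fun i hi => mem_Iio.2 (hs i hi)
  rw [Fin.card_Iio] at this
  omega

/-- (Theorem 1 of the paper, for point sets.) Let `P` be a set of `n`
points in `ℝ^d` and let `α₁ ≤ … ≤ α_k` be non-negative reals such that
`(d-1)·α_k + α_i + α_j ≤ 1` whenever `i + j ≤ k + 1`. Then there are `k` points such that
every closed halfspace containing at least `j` of them contains at least `α_j·n` points
of `P`. (Indices `1, …, k` are represented by `Fin k` via `i ↦ i + 1`.) -/
theorem k_points_finite (d k n : ℕ) (hk : 0 < k)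
    (P : Finset (EuclideanSpace ℝ (Fin d))) (hcard : P.card = n)
    (α : Fin k → ℝ)
    (hnonneg : ∀ i, 0 ≤ α i)
    (hmono : ∀ i j : Fin k, i ≤ j → α i ≤ α j)
    (hcond : ∀ i j : Fin k, (i : ℕ) + 1 + ((j : ℕ) + 1) ≤ k + 1 →
      ((d : ℝ) - 1) * α ⟨k - 1, by omega⟩ + α i + α j ≤ 1) :
    ∃ p : Fin k → EuclideanSpace ℝ (Fin d),
      ∀ (j : Fin k) (v : EuclideanSpace ℝ (Fin d)) (c : ℝ), v ≠ 0 →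
        (j : ℕ) + 1 ≤ (Finset.univ.filter (fun i => (inner ℝ v (p i) : ℝ) ≤ c)).card →
        α j * n ≤ (P.filter (fun x => (inner ℝ v x : ℝ) ≤ c)).card := by
  rcases subsingleton_or_nontrivial (EuclideanSpace ℝ (Fin d)) with hE | hE
  · exact ⟨0, fun _ v _ hv => absurd (Subsingleton.elim v 0) hv⟩
  rcases P.eq_empty_or_nonempty with rfl | hP
  · exact ⟨0, fun _ _ _ _ _ => by simp [← hcard]⟩
  subst hcard
  obtain ⟨u, hu⟩ := exists_ne (0 : EuclideanSpace ℝ (Fin d))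
  have hd : (0 : ℝ) ≤ d - 1 := by
    have : 0 < d := finrank_euclideanSpace_fin (𝕜 := ℝ) (n := d) ▸ finrank_pos
    rw [sub_nonneg]; exact_mod_cast this
  have hweights (i : Fin k) : ((finrank ℝ (EuclideanSpace ℝ (Fin d)) : ℝ) - 1) *
      max (α i) (α i.rev) + α i + α i.rev ≤ 1 := by
    rw [finrank_euclideanSpace_fin]
    refine le_trans ?_ (hcond i i.rev (by simp only [Fin.val_rev]; omega))
    gcongr
    exact max_le (hmono _ _ (Fin.le_iff_val_le_val.2 (by simp; omega)))
      (hmono _ _ (Fin.le_iff_val_le_val.2 (by simp; omega)))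
  choose p hp using fun i =>
    exists_two_sided_deep_point hu hP (hnonneg i) (hnonneg i.rev) (hweights i)
  refine ⟨p, fun j v c _ hj => ?_⟩
  set s := univ.filter fun i => ⟪v, p i⟫ ≤ c
  suffices ∃ i ∈ s, p i ∈ depthRegion P v (α j * #P) by
    obtain ⟨i, hi, hpi⟩ := this
    exact le_card_filter_of_mem_depthRegion hpi (mem_filter.1 hi).2
  rcases le_total 0 ⟪v, u⟫ with hvu | hvu
  · obtain ⟨i, hi, hji⟩ := Fin.exists_mem_le_of_lt_card s j hj
    exact ⟨i, hi, depthRegion_anti P v (by gcongr; exact hmono j i hji) ((hp i).1 v hvu)⟩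
  · obtain ⟨_, hi, hji⟩ := Fin.exists_mem_le_of_lt_card (s.image Fin.rev) j
      (by rwa [card_image_of_injective _ Fin.rev_injective])
    obtain ⟨i, hi', rfl⟩ := mem_image.1 hi
    exact ⟨i, hi', depthRegion_anti P v (by gcongr; exact hmono j i.rev hji) ((hp i).2 v hvu)⟩
end
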